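/- Let ν = b₁δ_{λ} + b₂δ_{λ²} + b₃δ_{λ³} + b₄δ_{λ⁴} + b₅δ_{λ⁵} with λ > 1, b₁,b₂,b₄,b₅ > 0 and b₃ < 0, and assume b₁b₄ + b₂b₃ ≥ 0 and b₂b₅ + b₃b₄ ≥ 0. Then ν*(tν) is a positive measure if and only if λ/(1+λ²) ≥ max(-b₁b₃/b₂², -b₃b₅/b₄²). -/

import Mathlib

open MeasureTheory MonoidAlgebra Finset

/-- The charge tν = Σ b_k λ_k δ_{λ_k}, i.e. multiplication of a finitely atomic
charge by the identity function t. -/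
noncomputable def tCharge (ξ : MonoidAlgebra ℝ ℝ) : MonoidAlgebra ℝ ℝ :=
  Finsupp.sum ξ.coeff fun x b => MonoidAlgebra.single x (x * b)

lemma tCharge_add (f g : MonoidAlgebra ℝ ℝ) : tCharge (f + g) = tCharge f + tCharge g := by
  unfold tCharge
  rw [MonoidAlgebra.coeff_add]
  exact Finsupp.sum_add_index (by simp) (by intros; simp [mul_add, MonoidAlgebra.single_add])

lemma tCharge_single (x b : ℝ) :
    tCharge (MonoidAlgebra.single x b) = MonoidAlgebra.single x (x * b) := by
  unfold tCharge
  rw [MonoidAlgebra.coeff_single]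
  exact Finsupp.sum_single_index (by simp)

lemma MA_add_apply (f g : MonoidAlgebra ℝ ℝ) (x : ℝ) : (f + g).coeff x = f.coeff x + g.coeff x := by
  rw [MonoidAlgebra.coeff_add]; rfl

lemma ite_nonneg' {p : Prop} [Decidable p] {a : ℝ} (h : 0 ≤ a) : 0 ≤ if p then a else 0 := by
  split <;> simp [h]

set_option maxHeartbeats 1600000 in
/-- Criterion for positivity of ν*(tν) for the 5-atomic charge with one negative
coefficient. -/
theorem positivity_criterion (l b₁ b₂ b₃ b₄ b₅ : ℝ) (hl : 1 < l)
    (ν : MonoidAlgebra ℝ ℝ)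
    (hν : ν = MonoidAlgebra.single l b₁ + MonoidAlgebra.single (l ^ 2) b₂ +
      MonoidAlgebra.single (l ^ 3) b₃ + MonoidAlgebra.single (l ^ 4) b₄ +
      MonoidAlgebra.single (l ^ 5) b₅)
    (h₁ : 0 < b₁) (h₂ : 0 < b₂) (h₄ : 0 < b₄) (h₅ : 0 < b₅) (h₃ : b₃ < 0)
    (hA : 0 ≤ b₁ * b₄ + b₂ * b₃) (hB : 0 ≤ b₂ * b₅ + b₃ * b₄) :
    (∀ t : ℝ, 0 ≤ (ν * tCharge ν).coeff t) ↔
      max (-(b₁ * b₃) / b₂ ^ 2) (-(b₃ * b₅) / b₄ ^ 2) ≤ l / (1 + l ^ 2) := by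
  have hl0 : (0:ℝ) < l := lt_trans one_pos hl
  have hP : ν * tCharge ν =
      MonoidAlgebra.single (l^2) (l*b₁^2)
    + MonoidAlgebra.single (l^3) (l*b₁*b₂ + l^2*b₁*b₂)
    + MonoidAlgebra.single (l^4) (l*b₁*b₃ + l^2*b₂^2 + l^3*b₁*b₃)
    + MonoidAlgebra.single (l^5) (l*b₁*b₄ + l^2*b₂*b₃ + l^3*b₂*b₃ + l^4*b₁*b₄)
    + MonoidAlgebra.single (l^6) (l*b₁*b₅ + l^2*b₂*b₄ + l^3*b₃^2 + l^4*b₂*b₄ + l^5*b₁*b₅)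
    + MonoidAlgebra.single (l^7) (l^2*b₂*b₅ + l^3*b₃*b₄ + l^4*b₃*b₄ + l^5*b₂*b₅)
    + MonoidAlgebra.single (l^8) (l^3*b₃*b₅ + l^4*b₄^2 + l^5*b₃*b₅)
    + MonoidAlgebra.single (l^9) (l^4*b₄*b₅ + l^5*b₄*b₅)
    + MonoidAlgebra.single (l^10) (l^5*b₅^2) := by
    rw [hν]
    simp only [tCharge_add, tCharge_single, mul_add, add_mul, MonoidAlgebra.single_mul_single,
      MonoidAlgebra.single_add]
    ring_nf
  have hinj : ∀ i j : ℕ, l ^ i = l ^ j ↔ i = j := by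
    have hm : StrictMono (fun n : ℕ => l ^ n) := fun i j h => pow_lt_pow_right₀ hl h
    exact fun i j => hm.injective.eq_iff
  have hval : ∀ t : ℝ, (ν * tCharge ν).coeff t =
      (if l^2 = t then l*b₁^2 else 0)
    + (if l^3 = t then l*b₁*b₂ + l^2*b₁*b₂ else 0)
    + (if l^4 = t then l*b₁*b₃ + l^2*b₂^2 + l^3*b₁*b₃ else 0)
    + (if l^5 = t then l*b₁*b₄ + l^2*b₂*b₃ + l^3*b₂*b₃ + l^4*b₁*b₄ else 0)
    + (if l^6 = t then l*b₁*b₅ + l^2*b₂*b₄ + l^3*b₃^2 + l^4*b₂*b₄ + l^5*b₁*b₅ else 0)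
    + (if l^7 = t then l^2*b₂*b₅ + l^3*b₃*b₄ + l^4*b₃*b₄ + l^5*b₂*b₅ else 0)
    + (if l^8 = t then l^3*b₃*b₅ + l^4*b₄^2 + l^5*b₃*b₅ else 0)
    + (if l^9 = t then l^4*b₄*b₅ + l^5*b₄*b₅ else 0)
    + (if l^10 = t then l^5*b₅^2 else 0) := by
    intro t
    rw [hP]
    simp only [MA_add_apply, MonoidAlgebra.coeff_single, Finsupp.single_apply]
  constructor
  · intro h
    have h4 := h (l^4)
    have h8 := h (l^8)
    rw [hval] at h4 h8
    simp only [hinj] at h4 h8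
    norm_num at h4 h8
    have hb2 : (0:ℝ) < b₂^2 := by positivity
    have hb4 : (0:ℝ) < b₄^2 := by positivity
    have hd : (0:ℝ) < 1 + l^2 := by positivity
    refine max_le ?_ ?_
    · rw [div_le_div_iff₀ hb2 hd]
      nlinarith [h4]
    · rw [div_le_div_iff₀ hb4 hd]
      nlinarith [h8, pow_pos hl0 3]
  · intro h
    have hmax1 := le_trans (le_max_left (-(b₁ * b₃) / b₂ ^ 2) (-(b₃ * b₅) / b₄ ^ 2)) h
    have hmax2 := le_trans (le_max_right (-(b₁ * b₃) / b₂ ^ 2) (-(b₃ * b₅) / b₄ ^ 2)) h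
    have hb2 : (0:ℝ) < b₂^2 := by positivity
    have hb4 : (0:ℝ) < b₄^2 := by positivity
    have hd : (0:ℝ) < 1 + l^2 := by positivity
    rw [div_le_div_iff₀ hb2 hd] at hmax1
    rw [div_le_div_iff₀ hb4 hd] at hmax2
    have hlfac : (0:ℝ) ≤ l + l^4 - l^2 - l^3 := by nlinarith [sq_nonneg (l-1), hl0]
    have c4 : 0 ≤ l*b₁*b₃ + l^2*b₂^2 + l^3*b₁*b₃ := by nlinarith [hmax1, hl0]
    have c8 : 0 ≤ l^3*b₃*b₅ + l^4*b₄^2 + l^5*b₃*b₅ := by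
      nlinarith [hmax2, pow_pos hl0 3]
    have c5 : 0 ≤ l*b₁*b₄ + l^2*b₂*b₃ + l^3*b₂*b₃ + l^4*b₁*b₄ := by
      nlinarith [mul_nonneg hA (by positivity : (0:ℝ) ≤ l^2 + l^3),
        mul_nonneg (mul_pos h₁ h₄).le hlfac]
    have c7 : 0 ≤ l^2*b₂*b₅ + l^3*b₃*b₄ + l^4*b₃*b₄ + l^5*b₂*b₅ := by
      nlinarith [mul_nonneg hB (by positivity : (0:ℝ) ≤ l^3 + l^4),
        mul_nonneg (mul_nonneg hl0.le (mul_pos h₂ h₅).le) hlfac]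
    have c6 : 0 ≤ l*b₁*b₅ + l^2*b₂*b₄ + l^3*b₃^2 + l^4*b₂*b₄ + l^5*b₁*b₅ := by
      have := mul_pos h₁ h₅
      have := mul_pos h₂ h₄
      nlinarith [sq_nonneg b₃, pow_pos hl0 2, pow_pos hl0 3, pow_pos hl0 4, pow_pos hl0 5,
        mul_pos hl0 (mul_pos h₁ h₅), mul_pos (pow_pos hl0 2) (mul_pos h₂ h₄),
        mul_pos (pow_pos hl0 4) (mul_pos h₂ h₄), mul_pos (pow_pos hl0 5) (mul_pos h₁ h₅),
        mul_nonneg (pow_pos hl0 3).le (sq_nonneg b₃)]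
    intro t
    rw [hval t]
    refine add_nonneg (add_nonneg (add_nonneg (add_nonneg (add_nonneg (add_nonneg (add_nonneg
      (add_nonneg ?_ ?_) ?_) ?_) ?_) ?_) ?_) ?_) ?_
    · exact ite_nonneg' (by positivity)
    · exact ite_nonneg' (by positivity)
    · exact ite_nonneg' c4
    · exact ite_nonneg' c5
    · exact ite_nonneg' c6
    · exact ite_nonneg' c7
    · exact ite_nonneg' c8
    · exact ite_nonneg' (by positivity)
    · exact ite_nonneg' (by positivity)
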